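/- Let ℓ be a prime and m, n ≥ 0 integers. Let u = (diag(ℓ^{a₁}, ℓ^{a₂}, ℓ^{a₃}, ℓ^{a₄}), diag(ℓ^{b₁}, ℓ^{b₂})) ∈ G(ℚ_ℓ), where a₁ ≥ a₂ ≥ a₃ ≥ a₄ ≥ 0 and b₁, b₂ ≥ 0 are integers with a₁ + a₄ = a₂ + a₃ = b₁ + b₂. Then the canonical map from the set of left K_{m,n}-cosets contained in K_{m,n} · u · K_{m,n} to the set of left G(ℤ_ℓ)-cosets contained in K_{m,n} · u · G(ℤ_ℓ), sending g·K_{m,n} to g·G(ℤ_ℓ), is a bijection; in particular, for k₁, k₂ ∈ K_{m,n}, one has k₁·u·G(ℤ_ℓ) = k₂·u·G(ℤ_ℓ) if and only if k₁·u·K_{m,n} = k₂·u·K_{m,n}. -/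

import Mathlib

open Pointwise

noncomputable section

/-- The ambient ring containing `G(ℚ_ℓ) = (GSp₄ ×_{GL₁} GL₂)(ℚ_ℓ)`:
pairs of a 4×4 and a 2×2 matrix over `ℚ_ℓ`. -/
abbrev MG (p : ℕ) [Fact p.Prime] :=
  Matrix (Fin 4) (Fin 4) ℚ_[p] × Matrix (Fin 2) (Fin 2) ℚ_[p]

/-- The standard skew-symmetric matrix `J` defining `GSp₄`. -/
def Jmat (p : ℕ) [Fact p.Prime] : Matrix (Fin 4) (Fin 4) ℚ_[p] :=
  !![0, 0, 0, 1; 0, 0, 1, 0; 0, -1, 0, 0; -1, 0, 0, 0]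

/-- `G(ℤ_ℓ)`: pairs `(g, h)` with `g ∈ GSp₄(ℤ_ℓ)`, `h ∈ GL₂(ℤ_ℓ)` and
`μ(g) = det h`. -/
def GZ (p : ℕ) [Fact p.Prime] : Set (MG p) :=
  {x | (∀ i j, ‖x.1 i j‖ ≤ 1) ∧ (∀ i j, ‖x.2 i j‖ ≤ 1) ∧
    ‖x.1.det‖ = 1 ∧ ‖x.2.det‖ = 1 ∧
    x.1.transpose * Jmat p * x.1 = x.2.det • Jmat p}

/-- The subgroup `K_{m,n}` of `G(ℤ_ℓ)`: pairs `(g, h)` with `μ(g) ≡ 1 (mod ℓ^m)` and the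
entries of `g` at positions (2,1), (3,1), (4,1), (4,2), (4,3) divisible by `ℓⁿ`. -/
def Kmn (p : ℕ) [Fact p.Prime] (m n : ℕ) : Set (MG p) :=
  {x ∈ GZ p | ‖x.2.det - 1‖ ≤ (p : ℝ) ^ (-(m : ℤ)) ∧
    ‖x.1 1 0‖ ≤ (p : ℝ) ^ (-(n : ℤ)) ∧ ‖x.1 2 0‖ ≤ (p : ℝ) ^ (-(n : ℤ)) ∧
    ‖x.1 3 0‖ ≤ (p : ℝ) ^ (-(n : ℤ)) ∧ ‖x.1 3 1‖ ≤ (p : ℝ) ^ (-(n : ℤ)) ∧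
    ‖x.1 3 2‖ ≤ (p : ℝ) ^ (-(n : ℤ))}

/-- The element `u = (diag(ℓ^{a₁}, ℓ^{a₂}, ℓ^{a₃}, ℓ^{a₄}), diag(ℓ^{b₁}, ℓ^{b₂}))`. -/
def uElt (p : ℕ) [Fact p.Prime] (a₁ a₂ a₃ a₄ b₁ b₂ : ℕ) : MG p :=
  (Matrix.diagonal ![(p : ℚ_[p]) ^ a₁, (p : ℚ_[p]) ^ a₂, (p : ℚ_[p]) ^ a₃,
      (p : ℚ_[p]) ^ a₄],
    Matrix.diagonal ![(p : ℚ_[p]) ^ b₁, (p : ℚ_[p]) ^ b₂])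

/-! The map `g K_{m,n} ↦ g G(ℤ_ℓ)` is surjective for formal reasons, and injectivity reduces to
the following: if `s ∈ G(ℤ_ℓ)` and `u s u⁻¹ ∈ K_{m,n}`, then `s ∈ K_{m,n}`. Indeed, `u s = k u`
forces `s` to have the multiplier of `k`, and `ℓ^{a_i} s_{ij} = k_{ij} ℓ^{a_j}`; since `u` has
decreasing exponents, at every position `(i, j)` below the diagonal this gives
`|s_{ij}| ≤ |k_{ij}|`, so `s` inherits the congruence conditions of `k`. -/

namespace Submonoid

variable {M : Type*} [Monoid M] {H G : Submonoid M}

theorem singleton_mul_coe_of_mem (hG : ∀ x ∈ G, ∃ y ∈ G, x * y = 1 ∧ y * x = 1) {s : M}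
    (hs : s ∈ G) : {s} * (G : Set M) = G := by
  refine subset_antisymm ?_ fun x hx => ?_
  · rintro _ ⟨_, rfl, y, hy, rfl⟩
    exact G.mul_mem hs hy
  · obtain ⟨t, ht, hst, -⟩ := hG s hs
    exact ⟨s, rfl, t * x, G.mul_mem ht hx, show s * (t * x) = x by rw [← mul_assoc, hst, one_mul]⟩

theorem singleton_mul_coe_eq_iff (hG : ∀ x ∈ G, ∃ y ∈ G, x * y = 1 ∧ y * x = 1) {g g' : M} :
    {g} * (G : Set M) = {g'} * G ↔ ∃ s ∈ G, g = g' * s := by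
  constructor
  · intro h
    obtain ⟨_, rfl, s, hs, hg⟩ : g ∈ {g'} * (G : Set M) := h ▸ ⟨g, rfl, 1, G.one_mem, mul_one g⟩
    exact ⟨s, hs, hg.symm⟩
  · rintro ⟨s, hs, rfl⟩
    rw [← Set.singleton_mul_singleton, mul_assoc, singleton_mul_coe_of_mem hG hs]

theorem coe_mul_coe_of_le (hHG : H ≤ G) : (H : Set M) * G = G :=
  subset_antisymm (Set.mul_subset_iff.2 fun _ hx _ hy => G.mul_mem (hHG hx) hy)
    (Set.subset_mul_right _ H.one_mem)

theorem setOf_cosets_in_double_coset (hG : ∀ x ∈ G, ∃ y ∈ G, x * y = 1 ∧ y * x = 1)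
    (u : M) : {C : Set M | ∃ g ∈ (H : Set M) * {u} * G, C = {g} * G} =
      (fun k => {k * u} * (G : Set M)) '' H := by
  ext C
  constructor
  · rintro ⟨_, ⟨_, ⟨k, hk, _, rfl, rfl⟩, s, hs, rfl⟩, rfl⟩
    exact ⟨k, hk, ((singleton_mul_coe_eq_iff hG).2 ⟨s, hs, rfl⟩).symm⟩
  · rintro ⟨k, hk, rfl⟩
    exact ⟨k * u, ⟨k * u, ⟨k, hk, u, rfl, rfl⟩, 1, G.one_mem, mul_one _⟩, rfl⟩

theorem singleton_mul_coe_eq_iff_of_conj (hH : ∀ x ∈ H, ∃ y ∈ H, x * y = 1 ∧ y * x = 1)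
    (hG : ∀ x ∈ G, ∃ y ∈ G, x * y = 1 ∧ y * x = 1) (hHG : H ≤ G) {u : M}
    (hu : ∀ k ∈ H, ∀ s ∈ G, u * s = k * u → s ∈ H) {k₁ k₂ : M} (hk₁ : k₁ ∈ H) (hk₂ : k₂ ∈ H) :
    {k₁ * u} * (G : Set M) = {k₂ * u} * G ↔ {k₁ * u} * (H : Set M) = {k₂ * u} * H := by
  rw [singleton_mul_coe_eq_iff hG, singleton_mul_coe_eq_iff hH]
  refine ⟨fun ⟨s, hs, h⟩ => ⟨s, ?_, h⟩, fun ⟨s, hs, h⟩ => ⟨s, hHG hs, h⟩⟩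
  obtain ⟨k, hk, -, hkk₂⟩ := hH k₂ hk₂
  refine hu (k * k₁) (H.mul_mem hk hk₁) s hs ?_
  rw [mul_assoc, h, ← mul_assoc, ← mul_assoc, hkk₂, one_mul]

theorem bijOn_cosets_of_conj (hH : ∀ x ∈ H, ∃ y ∈ H, x * y = 1 ∧ y * x = 1)
    (hG : ∀ x ∈ G, ∃ y ∈ G, x * y = 1 ∧ y * x = 1) (hHG : H ≤ G) {u : M}
    (hu : ∀ k ∈ H, ∀ s ∈ G, u * s = k * u → s ∈ H) :
    Set.BijOn (fun C : Set M => C * G)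
      {C : Set M | ∃ g ∈ (H : Set M) * {u} * H, C = {g} * H}
      {D : Set M | ∃ g ∈ (H : Set M) * {u} * G, D = {g} * G} := by
  have himage : (fun k => {k * u} * (G : Set M)) '' H =
      (fun C : Set M => C * G) '' ((fun k => {k * u} * (H : Set M)) '' H) := by
    simp_rw [Set.image_image, mul_assoc, coe_mul_coe_of_le hHG]
  rw [setOf_cosets_in_double_coset hH, setOf_cosets_in_double_coset hG, himage]
  refine Set.InjOn.bijOn_image ?_
  rintro _ ⟨k₁, hk₁, rfl⟩ _ ⟨k₂, hk₂, rfl⟩ h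
  simp only [mul_assoc, coe_mul_coe_of_le hHG] at h
  exact (singleton_mul_coe_eq_iff_of_conj hH hG hHG hu hk₁ hk₂).1 h

end Submonoid

open scoped Matrix

variable {p : ℕ} [Fact p.Prime]

theorem norm_le_of_pow_mul_eq_mul_pow {x y : ℚ_[p]} {r c : ℕ} (hrc : r ≤ c)
    (h : (p : ℚ_[p]) ^ r * y = x * (p : ℚ_[p]) ^ c) : ‖y‖ ≤ ‖x‖ := by
  have hnorm := congrArg norm h
  rw [norm_mul, norm_mul, Padic.norm_p_pow, Padic.norm_p_pow] at hnorm
  have hp : (1 : ℝ) ≤ p := mod_cast (Fact.out : p.Prime).one_lt.le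
  have hpr : (0 : ℝ) < (p : ℝ) ^ (-(r : ℤ)) := zpow_pos (by linarith) _
  refine le_of_mul_le_mul_left ?_ hpr
  calc (p : ℝ) ^ (-(r : ℤ)) * ‖y‖ = ‖x‖ * (p : ℝ) ^ (-(c : ℤ)) := hnorm
    _ ≤ ‖x‖ * (p : ℝ) ^ (-(r : ℤ)) := by gcongr
    _ = (p : ℝ) ^ (-(r : ℤ)) * ‖x‖ := mul_comm _ _

namespace Matrix

variable {ι : Type*} [Fintype ι]

theorem norm_mul_apply_le {A B : Matrix ι ι ℚ_[p]} {i j : ι} {c : ℝ} (hc : 0 ≤ c)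
    (h : ∀ k, ‖A i k‖ * ‖B k j‖ ≤ c) : ‖(A * B) i j‖ ≤ c := by
  rw [mul_apply]
  exact IsUltrametricDist.norm_sum_le_of_forall_le_of_nonneg hc fun k _ =>
    (norm_mul _ _).trans_le (h k)

theorem norm_inv_apply_le_one [DecidableEq ι] {A : Matrix ι ι ℚ_[p]} (hA : ∀ i j, ‖A i j‖ ≤ 1)
    (hdet : ‖A.det‖ = 1) (i j : ι) : ‖A⁻¹ i j‖ ≤ 1 := by
  let B : Matrix ι ι ℤ_[p] := fun i j => ⟨A i j, hA i j⟩
  have hB : PadicInt.Coe.ringHom.mapMatrix B = A := rfl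
  rw [inv_def, smul_apply, smul_eq_mul, norm_mul, Ring.inverse_eq_inv, norm_inv, hdet, inv_one,
    one_mul, ← hB, ← RingHom.map_adjugate]
  exact PadicInt.norm_le_one _

theorem norm_apply_le_of_diagonal_pow_mul_eq [DecidableEq ι] {a : ι → ℕ} {s k : Matrix ι ι ℚ_[p]}
    (h : diagonal (fun i => (p : ℚ_[p]) ^ a i) * s = k * diagonal (fun i => (p : ℚ_[p]) ^ a i))
    {i j : ι} (hij : a i ≤ a j) : ‖s i j‖ ≤ ‖k i j‖ :=
  norm_le_of_pow_mul_eq_mul_pow hij <| by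
    simpa [diagonal_mul, mul_diagonal] using congrFun (congrFun h i) j

end Matrix

theorem Jmat_mul_Jmat : Jmat p * Jmat p = -1 := by
  ext i j
  fin_cases i <;> fin_cases j <;> simp [Jmat, Matrix.mul_apply, Fin.sum_univ_four]

theorem norm_Jmat_mul_transpose_mul_Jmat_apply (A : Matrix (Fin 4) (Fin 4) ℚ_[p]) (i j : Fin 4) :
    ‖(Jmat p * Aᵀ * Jmat p) i j‖ = ‖A j.rev i.rev‖ := by
  fin_cases i <;> fin_cases j <;>
    simp [Jmat, Matrix.mul_apply, Matrix.vecMul, dotProduct, Fin.sum_univ_four]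

namespace GZ

theorem one_mem : (1 : MG p) ∈ GZ p := by
  refine ⟨?_, ?_, by simp, by simp, by simp⟩ <;>
  · intro i j
    rcases eq_or_ne i j with h | h <;> simp [h]

theorem mul_mem {x y : MG p} (hx : x ∈ GZ p) (hy : y ∈ GZ p) : x * y ∈ GZ p := by
  obtain ⟨hx1, hx2, hxd1, hxd2, hxJ⟩ := hx
  obtain ⟨hy1, hy2, hyd1, hyd2, hyJ⟩ := hy
  refine ⟨fun i j => ?_, fun i j => ?_, ?_, ?_, ?_⟩
  · exact Matrix.norm_mul_apply_le zero_le_one fun k =>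
      mul_le_one₀ (hx1 i k) (norm_nonneg _) (hy1 k j)
  · exact Matrix.norm_mul_apply_le zero_le_one fun k =>
      mul_le_one₀ (hx2 i k) (norm_nonneg _) (hy2 k j)
  · simp [Matrix.det_mul, hxd1, hyd1]
  · simp [Matrix.det_mul, hxd2, hyd2]
  · calc (x.1 * y.1)ᵀ * Jmat p * (x.1 * y.1) = y.1ᵀ * (x.1ᵀ * Jmat p * x.1) * y.1 := by
          simp only [Matrix.transpose_mul, Matrix.mul_assoc]
      _ = (x.2 * y.2).det • Jmat p := by
          rw [hxJ, Matrix.mul_smul, Matrix.smul_mul, hyJ, smul_smul, Matrix.det_mul]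

theorem det_fst_ne_zero {x : MG p} (hx : x ∈ GZ p) : x.1.det ≠ 0 :=
  norm_ne_zero_iff.1 (hx.2.2.1.trans_ne one_ne_zero)

theorem det_snd_ne_zero {x : MG p} (hx : x ∈ GZ p) : x.2.det ≠ 0 :=
  norm_ne_zero_iff.1 (hx.2.2.2.1.trans_ne one_ne_zero)

theorem mul_inv {x : MG p} (hx : x ∈ GZ p) : x * x⁻¹ = 1 :=
  Prod.ext (Matrix.mul_nonsing_inv _ (isUnit_iff_ne_zero.2 (det_fst_ne_zero hx)))
    (Matrix.mul_nonsing_inv _ (isUnit_iff_ne_zero.2 (det_snd_ne_zero hx)))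

theorem inv_mul {x : MG p} (hx : x ∈ GZ p) : x⁻¹ * x = 1 :=
  Prod.ext (Matrix.nonsing_inv_mul _ (isUnit_iff_ne_zero.2 (det_fst_ne_zero hx)))
    (Matrix.nonsing_inv_mul _ (isUnit_iff_ne_zero.2 (det_snd_ne_zero hx)))

theorem inv_mem {x : MG p} (hx : x ∈ GZ p) : x⁻¹ ∈ GZ p := by
  have hinv : x.1 * x.1⁻¹ = 1 := congrArg Prod.fst (mul_inv hx)
  have hμ := det_snd_ne_zero hx
  obtain ⟨hx1, hx2, hxd1, hxd2, hxJ⟩ := hx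
  refine ⟨Matrix.norm_inv_apply_le_one hx1 hxd1, Matrix.norm_inv_apply_le_one hx2 hxd2, ?_, ?_, ?_⟩
  · simp [Matrix.det_nonsing_inv, hxd1]
  · simp [Matrix.det_nonsing_inv, hxd2]
  · have hJ : x.2.det • (x.1⁻¹ᵀ * Jmat p * x.1⁻¹) = Jmat p :=
      calc _ = x.1⁻¹ᵀ * (x.1ᵀ * Jmat p * x.1) * x.1⁻¹ := by
            rw [hxJ, Matrix.mul_smul, Matrix.smul_mul]
        _ = (x.1 * x.1⁻¹)ᵀ * Jmat p * (x.1 * x.1⁻¹) := by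
            simp only [Matrix.transpose_mul, Matrix.mul_assoc]
        _ = Jmat p := by rw [hinv]; simp
    show x.1⁻¹ᵀ * Jmat p * x.1⁻¹ = x.2⁻¹.det • Jmat p
    rwa [Matrix.det_nonsing_inv, Ring.inverse_eq_inv, eq_inv_smul_iff₀ hμ]

theorem fst_inv_eq {x : MG p} (hx : x ∈ GZ p) :
    x.1⁻¹ = -(x.2.det)⁻¹ • (Jmat p * x.1ᵀ * Jmat p) := by
  refine Matrix.inv_eq_left_inv ?_
  rw [Matrix.smul_mul, Matrix.mul_assoc, Matrix.mul_assoc, ← Matrix.mul_assoc _ _ x.1, hx.2.2.2.2,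
    Matrix.mul_smul, Jmat_mul_Jmat, smul_smul, neg_mul, inv_mul_cancel₀ (det_snd_ne_zero hx)]
  simp

theorem norm_fst_inv_apply {x : MG p} (hx : x ∈ GZ p) (i j : Fin 4) :
    ‖x.1⁻¹ i j‖ = ‖x.1 j.rev i.rev‖ := by
  rw [fst_inv_eq hx, Matrix.smul_apply, smul_eq_mul, norm_mul, norm_neg, norm_inv,
    hx.2.2.2.1, inv_one, one_mul, norm_Jmat_mul_transpose_mul_Jmat_apply]

variable (p) in
def submonoid : Submonoid (MG p) where
  carrier := GZ p
  mul_mem' := mul_mem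
  one_mem' := one_mem

theorem exists_inverse : ∀ x ∈ submonoid p, ∃ y ∈ submonoid p, x * y = 1 ∧ y * x = 1 :=
  fun _ hx => ⟨_, inv_mem hx, mul_inv hx, inv_mul hx⟩

end GZ

/-- The entries constrained in `K_{m,n}`, indexed from `0`: the paper's positions
(2,1), (3,1), (4,1), (4,2), (4,3). -/
def klingenPositions : Finset (Fin 4 × Fin 4) := {(1, 0), (2, 0), (3, 0), (3, 1), (3, 2)}

theorem lt_of_mem_klingenPositions : ∀ ij ∈ klingenPositions, ij.2 < ij.1 := by decide

theorem mem_klingenPositions_or_mem_klingenPositions :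
    ∀ i j k, (i, j) ∈ klingenPositions → (i, k) ∈ klingenPositions ∨ (k, j) ∈ klingenPositions := by
  decide

theorem rev_mem_klingenPositions :
    ∀ i j, (i, j) ∈ klingenPositions → (j.rev, i.rev) ∈ klingenPositions := by
  decide

theorem uElt_fst (a₁ a₂ a₃ a₄ b₁ b₂ : ℕ) :
    (uElt p a₁ a₂ a₃ a₄ b₁ b₂).1 = Matrix.diagonal fun i => (p : ℚ_[p]) ^ ![a₁, a₂, a₃, a₄] i :=
  congrArg Matrix.diagonal <| funext fun i => by fin_cases i <;> rfl

namespace Kmn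

theorem mem_iff {m n : ℕ} {x : MG p} :
    x ∈ Kmn p m n ↔ x ∈ GZ p ∧ ‖x.2.det - 1‖ ≤ (p : ℝ) ^ (-(m : ℤ)) ∧
      ∀ ij ∈ klingenPositions, ‖x.1 ij.1 ij.2‖ ≤ (p : ℝ) ^ (-(n : ℤ)) := by
  rw [Kmn, Set.mem_sep_iff]
  simp [klingenPositions]

theorem one_mem (m n : ℕ) : (1 : MG p) ∈ Kmn p m n := by
  refine mem_iff.2 ⟨GZ.one_mem, by simp, fun ij hij => ?_⟩
  rw [Prod.fst_one, Matrix.one_apply_ne (lt_of_mem_klingenPositions ij hij).ne', norm_zero]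
  positivity

theorem mul_mem {m n : ℕ} {x y : MG p} (hx : x ∈ Kmn p m n) (hy : y ∈ Kmn p m n) :
    x * y ∈ Kmn p m n := by
  obtain ⟨hxG, hxm, hxn⟩ := mem_iff.1 hx
  obtain ⟨hyG, hym, hyn⟩ := mem_iff.1 hy
  refine mem_iff.2 ⟨GZ.mul_mem hxG hyG, ?_, fun ⟨i, j⟩ hij => ?_⟩
  · have hsplit : (x * y).2.det - 1 = x.2.det * (y.2.det - 1) + (x.2.det - 1) := by
      rw [Prod.snd_mul, Matrix.det_mul]; ring
    rw [hsplit]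
    refine (Padic.nonarchimedean _ _).trans (max_le ?_ hxm)
    rwa [norm_mul, hxG.2.2.2.1, one_mul]
  · refine Matrix.norm_mul_apply_le (by positivity) fun k => ?_
    rcases mem_klingenPositions_or_mem_klingenPositions i j k hij with hik | hkj
    · exact (mul_le_of_le_one_right (norm_nonneg _) (hyG.1 k j)).trans (hxn _ hik)
    · exact (mul_le_of_le_one_left (norm_nonneg _) (hxG.1 i k)).trans (hyn _ hkj)

theorem inv_mem {m n : ℕ} {x : MG p} (hx : x ∈ Kmn p m n) : x⁻¹ ∈ Kmn p m n := by
  obtain ⟨hxG, hxm, hxn⟩ := mem_iff.1 hx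
  refine mem_iff.2 ⟨GZ.inv_mem hxG, ?_, fun ⟨i, j⟩ hij => ?_⟩
  · have hμ := GZ.det_snd_ne_zero hxG
    have hsplit : x⁻¹.2.det - 1 = -(x.2.det - 1) * x.2.det⁻¹ := by
      rw [Prod.snd_inv, Matrix.det_nonsing_inv, Ring.inverse_eq_inv]; field_simp; ring
    rwa [hsplit, norm_mul, norm_neg, norm_inv, hxG.2.2.2.1, inv_one, mul_one]
  · rw [Prod.fst_inv, GZ.norm_fst_inv_apply hxG]
    exact hxn _ (rev_mem_klingenPositions i j hij)

variable (p) in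
def submonoid (m n : ℕ) : Submonoid (MG p) where
  carrier := Kmn p m n
  mul_mem' := mul_mem
  one_mem' := one_mem m n

theorem exists_inverse (m n : ℕ) :
    ∀ x ∈ submonoid p m n, ∃ y ∈ submonoid p m n, x * y = 1 ∧ y * x = 1 :=
  fun _ hx => ⟨_, inv_mem hx, GZ.mul_inv hx.1, GZ.inv_mul hx.1⟩

theorem submonoid_le (m n : ℕ) : submonoid p m n ≤ GZ.submonoid p := fun _ hx => hx.1

theorem mem_of_uElt_mul_eq {m n a₁ a₂ a₃ a₄ b₁ b₂ : ℕ}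
    (h12 : a₂ ≤ a₁) (h23 : a₃ ≤ a₂) (h34 : a₄ ≤ a₃) {k s : MG p} (hk : k ∈ Kmn p m n)
    (hs : s ∈ GZ p) (h : uElt p a₁ a₂ a₃ a₄ b₁ b₂ * s = k * uElt p a₁ a₂ a₃ a₄ b₁ b₂) :
    s ∈ Kmn p m n := by
  obtain ⟨-, hkm, hkn⟩ := mem_iff.1 hk
  have hdet : s.2.det = k.2.det := by
    have hu : (uElt p a₁ a₂ a₃ a₄ b₁ b₂).2.det ≠ 0 := by
      simp [uElt, Matrix.det_diagonal, (Fact.out : p.Prime).ne_zero]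
    have hprod := congrArg (fun x : MG p => x.2.det) h
    simp only [Prod.snd_mul, Matrix.det_mul] at hprod
    exact mul_left_cancel₀ hu (hprod.trans (mul_comm _ _))
  have hexp : ∀ ij ∈ klingenPositions, ![a₁, a₂, a₃, a₄] ij.1 ≤ ![a₁, a₂, a₃, a₄] ij.2 := by
    simp only [klingenPositions, Finset.mem_insert, Finset.mem_singleton, forall_eq_or_imp,
      forall_eq]
    exact ⟨h12, h23.trans h12, (h34.trans h23).trans h12, h34.trans h23, h34⟩
  have h1 := congrArg Prod.fst h
  simp only [Prod.fst_mul, uElt_fst] at h1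
  exact mem_iff.2 ⟨hs, hdet ▸ hkm, fun ij hij =>
    (Matrix.norm_apply_le_of_diagonal_pow_mul_eq h1 (hexp ij hij)).trans (hkn ij hij)⟩

end Kmn

theorem stmt12_general (p : ℕ) [Fact p.Prime] (m n : ℕ) (a₁ a₂ a₃ a₄ b₁ b₂ : ℕ)
    (h12 : a₂ ≤ a₁) (h23 : a₃ ≤ a₂) (h34 : a₄ ≤ a₃) :
    Set.BijOn (fun C : Set (MG p) => C * GZ p)
      {C : Set (MG p) | ∃ g ∈ Kmn p m n * {uElt p a₁ a₂ a₃ a₄ b₁ b₂} * Kmn p m n,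
        C = ({g} : Set (MG p)) * Kmn p m n}
      {D : Set (MG p) | ∃ g ∈ Kmn p m n * {uElt p a₁ a₂ a₃ a₄ b₁ b₂} * GZ p,
        D = ({g} : Set (MG p)) * GZ p} ∧
    ∀ k₁ ∈ Kmn p m n, ∀ k₂ ∈ Kmn p m n,
      (({k₁} : Set (MG p)) * {uElt p a₁ a₂ a₃ a₄ b₁ b₂} * GZ p =
          ({k₂} : Set (MG p)) * {uElt p a₁ a₂ a₃ a₄ b₁ b₂} * GZ p ↔
        ({k₁} : Set (MG p)) * {uElt p a₁ a₂ a₃ a₄ b₁ b₂} * Kmn p m n =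
          ({k₂} : Set (MG p)) * {uElt p a₁ a₂ a₃ a₄ b₁ b₂} * Kmn p m n) := by
  have hu : ∀ k ∈ Kmn.submonoid p m n, ∀ s ∈ GZ.submonoid p,
      uElt p a₁ a₂ a₃ a₄ b₁ b₂ * s = k * uElt p a₁ a₂ a₃ a₄ b₁ b₂ → s ∈ Kmn.submonoid p m n :=
    fun _ hk _ hs => Kmn.mem_of_uElt_mul_eq h12 h23 h34 hk hs
  refine ⟨Submonoid.bijOn_cosets_of_conj (Kmn.exists_inverse m n) GZ.exists_inverse
    (Kmn.submonoid_le m n) hu, fun k₁ hk₁ k₂ hk₂ => ?_⟩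
  simp only [Set.singleton_mul_singleton]
  exact Submonoid.singleton_mul_coe_eq_iff_of_conj (Kmn.exists_inverse m n) GZ.exists_inverse
    (Kmn.submonoid_le m n) hu hk₁ hk₂

/-- The canonical map `g·K_{m,n} ↦ g·G(ℤ_ℓ)` is a bijection from the left `K_{m,n}`-cosets
contained in `K_{m,n}·u·K_{m,n}` to the left `G(ℤ_ℓ)`-cosets contained in
`K_{m,n}·u·G(ℤ_ℓ)`; in particular, for `k₁, k₂ ∈ K_{m,n}` one has
`k₁·u·G(ℤ_ℓ) = k₂·u·G(ℤ_ℓ)` iff `k₁·u·K_{m,n} = k₂·u·K_{m,n}`. -/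
theorem stmt12 (p : ℕ) [Fact p.Prime] (m n : ℕ) (a₁ a₂ a₃ a₄ b₁ b₂ : ℕ)
    (h12 : a₂ ≤ a₁) (h23 : a₃ ≤ a₂) (h34 : a₄ ≤ a₃)
    (hsum1 : a₁ + a₄ = a₂ + a₃) (hsum2 : a₂ + a₃ = b₁ + b₂) :
    Set.BijOn (fun C : Set (MG p) => C * GZ p)
      {C : Set (MG p) | ∃ g ∈ Kmn p m n * {uElt p a₁ a₂ a₃ a₄ b₁ b₂} * Kmn p m n,
        C = ({g} : Set (MG p)) * Kmn p m n}
      {D : Set (MG p) | ∃ g ∈ Kmn p m n * {uElt p a₁ a₂ a₃ a₄ b₁ b₂} * GZ p,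
        D = ({g} : Set (MG p)) * GZ p} ∧
    ∀ k₁ ∈ Kmn p m n, ∀ k₂ ∈ Kmn p m n,
      (({k₁} : Set (MG p)) * {uElt p a₁ a₂ a₃ a₄ b₁ b₂} * GZ p =
          ({k₂} : Set (MG p)) * {uElt p a₁ a₂ a₃ a₄ b₁ b₂} * GZ p ↔
        ({k₁} : Set (MG p)) * {uElt p a₁ a₂ a₃ a₄ b₁ b₂} * Kmn p m n =
          ({k₂} : Set (MG p)) * {uElt p a₁ a₂ a₃ a₄ b₁ b₂} * Kmn p m n) :=
  stmt12_general p m n a₁ a₂ a₃ a₄ b₁ b₂ h12 h23 h34
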